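/- arXiv:2203.12013 — 4 statements merged into one kernel-verified Lean document; each statement's English description precedes it below -/
import Mathlib

section
/- For any integer n ≥ 1, there do not exist coprime integers a and m such that m·(1/2) < a < m·(2n+3)/(4n+4) and m·(2/(4n+5)) < 1. -/
/-- For any integer `n ≥ 1`, there do not exist coprime integers `a` and `m` such that
`m·(1/2) < a < m·(2n+3)/(4n+4)` and `m·(2/(4n+5)) < 1` (inequalities over `ℚ`). -/
theorem stmt_0 (n : ℤ) (hn : 1 ≤ n) :
    ¬ ∃ a m : ℤ, IsCoprime a m ∧
      (m : ℚ) * (1 / 2) < (a : ℚ) ∧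
      (a : ℚ) < (m : ℚ) * ((2 * (n : ℚ) + 3) / (4 * (n : ℚ) + 4)) ∧
      (m : ℚ) * (2 / (4 * (n : ℚ) + 5)) < 1 := by
  rintro ⟨a, m, -, h1, h2, h3⟩
  have hnQ : (1 : ℚ) ≤ (n : ℚ) := by exact_mod_cast hn
  have hd1 : (0 : ℚ) < 4 * (n : ℚ) + 4 := by linarith
  have hd2 : (0 : ℚ) < 4 * (n : ℚ) + 5 := by linarith
  have h1' : (m : ℤ) < 2 * a := by
    have : (m : ℚ) < 2 * a := by linarith
    exact_mod_cast this
  have h2' : (a : ℤ) * (4 * n + 4) < m * (2 * n + 3) := by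
    have : (a : ℚ) * (4 * (n : ℚ) + 4) < (m : ℚ) * (2 * (n : ℚ) + 3) := by
      rw [mul_div_assoc'] at h2
      calc (a : ℚ) * (4 * (n : ℚ) + 4)
          < (m : ℚ) * (2 * (n : ℚ) + 3) / (4 * (n : ℚ) + 4) * (4 * (n : ℚ) + 4) := by
            exact mul_lt_mul_of_pos_right h2 hd1
        _ = (m : ℚ) * (2 * (n : ℚ) + 3) := div_mul_cancel₀ _ hd1.ne'
    exact_mod_cast this
  have h3' : (m : ℤ) * 2 < 4 * n + 5 := by
    have : (m : ℚ) * 2 < 4 * (n : ℚ) + 5 := by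
      rw [mul_div_assoc', div_lt_one hd2] at h3
      exact h3
    exact_mod_cast this
  nlinarith [mul_le_mul_of_nonneg_right (by linarith : (m : ℤ) + 1 ≤ 2 * a)
    (by linarith : (0 : ℤ) ≤ 2 * n + 2)]
end

section
/- Define the formal semigroup set S_n ⊆ ℕ by S_n = {4i : 0 ≤ i ≤ n} ∪ {4n+2} ∪ {4n+4j+4, 4n+4j+5, 4n+4j+6 : 0 ≤ j ≤ n−1} ∪ {8n+4} ∪ {k ∈ ℕ : k > 8n+4}. Then for every integer n ≥ 1, S_n is closed under addition (i.e., S_n is an additive subsemigroup of ℕ containing 0). -/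
/-- The formal semigroup set
`S_n = {4i : 0 ≤ i ≤ n} ∪ {4n+2} ∪ {4n+4j+4, 4n+4j+5, 4n+4j+6 : 0 ≤ j ≤ n−1}
      ∪ {8n+4} ∪ {k : k > 8n+4}`. -/
def formalSemigroupSet (n : ℕ) : Set ℕ :=
  {x | ∃ i ≤ n, x = 4 * i} ∪ {4 * n + 2} ∪
    {x | ∃ j < n, x = 4 * n + 4 * j + 4 ∨ x = 4 * n + 4 * j + 5 ∨ x = 4 * n + 4 * j + 6} ∪
    {8 * n + 4} ∪ {x | 8 * n + 4 < x}

/-- For every `n ≥ 1`, `S_n` contains `0` and is closed under addition, i.e. it is an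
additive subsemigroup of `ℕ` containing `0`. -/
theorem stmt_12 (n : ℕ) (hn : 1 ≤ n) :
    0 ∈ formalSemigroupSet n ∧
    ∀ a ∈ formalSemigroupSet n, ∀ b ∈ formalSemigroupSet n,
      a + b ∈ formalSemigroupSet n := by
  have hmem : ∀ x, x ∈ formalSemigroupSet n ↔
      ((x ≤ 4 * n ∧ x % 4 = 0) ∨ x = 4 * n + 2 ∨
        (4 * n + 4 ≤ x ∧ x ≤ 8 * n + 2 ∧ x % 4 ≠ 3) ∨ 8 * n + 4 ≤ x) := by
    intro x
    simp only [formalSemigroupSet, Set.mem_union, Set.mem_setOf_eq, Set.mem_singleton_iff]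
    constructor
    · rintro ((((⟨i, hi, hx⟩ | h) | ⟨j, hj, h⟩) | h) | h) <;> omega
    · rintro (⟨h1, h2⟩ | h | ⟨h1, h2, h3⟩ | h)
      · exact Or.inl (Or.inl (Or.inl (Or.inl ⟨x / 4, by omega, by omega⟩)))
      · exact Or.inl (Or.inl (Or.inl (Or.inr h)))
      · exact Or.inl (Or.inl (Or.inr ⟨(x - 4 * n - 4) / 4, by omega, by omega⟩))
      · rcases eq_or_lt_of_le h with h' | h'
        · exact Or.inl (Or.inr h'.symm)
        · exact Or.inr h'
  constructor
  · rw [hmem]; omega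
  · intro a ha b hb
    rw [hmem] at ha hb ⊢
    omega
end

section
/- For every integer n ≥ 1, the additive semigroup S_n = {0, 4, 8, …, 4n} ∪ {4n+2} ∪ ⋃_{j=0}^{n−1}{4n+4+4j, 4n+5+4j, 4n+6+4j} ∪ {8n+4} ∪ {m : m > 8n+4} is generated by the three elements {4, 4n+2, 4n+5}. -/
/-- Characterization of the semigroup by residues mod 4. -/
def goodP (n x : ℕ) : Prop :=
  x % 4 = 0 ∨ (x % 4 = 2 ∧ 4 * n + 2 ≤ x) ∨ (x % 4 = 1 ∧ 4 * n + 5 ≤ x)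
    ∨ (x % 4 = 3 ∧ 8 * n + 7 ≤ x)

/-- Auxiliary submonoid: numbers satisfying `goodP`. -/
def goodSet (n : ℕ) : AddSubmonoid ℕ where
  carrier := {x | goodP n x}
  zero_mem' := by left; rfl
  add_mem' := by
    intro a b ha hb
    simp only [goodP, Set.mem_setOf_eq] at *
    omega

lemma mem_goodSet (n x : ℕ) : x ∈ goodSet n ↔ goodP n x := Iff.rfl

lemma formal_eq_good (n : ℕ) (hn : 1 ≤ n) :
    formalSemigroupSet n = {x | goodP n x} := by
  ext x
  simp only [formalSemigroupSet, goodP, Set.mem_union, Set.mem_setOf_eq,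
    Set.mem_singleton_iff]
  constructor
  · rintro ((((⟨i, hi, rfl⟩ | rfl) | ⟨j, hj, h⟩) | rfl) | h) <;> omega
  · rintro (h0 | ⟨h2, hx⟩ | ⟨h1, hx⟩ | ⟨h3, hx⟩)
    · rcases le_or_gt x (4 * n) with h | h
      · exact Or.inl (Or.inl (Or.inl (Or.inl ⟨x / 4, by omega, by omega⟩)))
      · rcases lt_or_ge x (8 * n + 4) with h' | h'
        · exact Or.inl (Or.inl (Or.inr ⟨(x - 4 * n - 4) / 4, by omega, by omega⟩))
        · rcases eq_or_lt_of_le h' with h'' | h''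
          · exact Or.inl (Or.inr h''.symm)
          · exact Or.inr h''
    · rcases eq_or_lt_of_le hx with h | h
      · exact Or.inl (Or.inl (Or.inl (Or.inr h.symm)))
      · rcases le_or_gt x (8 * n + 2) with h' | h'
        · exact Or.inl (Or.inl (Or.inr ⟨(x - 4 * n - 6) / 4, by omega, by omega⟩))
        · exact Or.inr (by omega)
    · rcases le_or_gt x (8 * n + 1) with h' | h'
      · exact Or.inl (Or.inl (Or.inr ⟨(x - 4 * n - 5) / 4, by omega, by omega⟩))
      · exact Or.inr (by omega)
    · exact Or.inr (by omega)

lemma good_subset_closure (n : ℕ) :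
    {x | goodP n x} ⊆ (AddSubmonoid.closure ({4, 4 * n + 2, 4 * n + 5} : Set ℕ) : Set ℕ) := by
  intro x hx
  set C := AddSubmonoid.closure ({4, 4 * n + 2, 4 * n + 5} : Set ℕ) with hC
  have h4 : (4 : ℕ) ∈ C := AddSubmonoid.subset_closure (by simp)
  have h2 : (4 * n + 2 : ℕ) ∈ C := AddSubmonoid.subset_closure (by simp)
  have h5 : (4 * n + 5 : ℕ) ∈ C := AddSubmonoid.subset_closure (by simp)
  have key : ∀ k : ℕ, 4 * k ∈ C := by
    intro k
    have := nsmul_mem h4 k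
    simpa [nsmul_eq_mul, mul_comm] using this
  rcases hx with h0 | ⟨hr, hx⟩ | ⟨hr, hx⟩ | ⟨hr, hx⟩
  · have : x = 4 * (x / 4) := by omega
    rw [this]; exact key _
  · have : x = (4 * n + 2) + 4 * ((x - (4 * n + 2)) / 4) := by omega
    rw [this]; exact AddSubmonoid.add_mem _ h2 (key _)
  · have : x = (4 * n + 5) + 4 * ((x - (4 * n + 5)) / 4) := by omega
    rw [this]; exact AddSubmonoid.add_mem _ h5 (key _)
  · have : x = (4 * n + 2) + ((4 * n + 5) + 4 * ((x - (8 * n + 7)) / 4)) := by omega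
    rw [this]
    exact AddSubmonoid.add_mem _ h2 (AddSubmonoid.add_mem _ h5 (key _))

/-- For every `n ≥ 1`, the semigroup `S_n` is generated by `{4, 4n+2, 4n+5}`: it equals
the smallest subset of `ℕ` containing `0` and these generators which is closed under
addition (the additive submonoid closure). -/
theorem stmt_13 (n : ℕ) (hn : 1 ≤ n) :
    formalSemigroupSet n
      = (AddSubmonoid.closure ({4, 4 * n + 2, 4 * n + 5} : Set ℕ) : Set ℕ) := by
  rw [formal_eq_good n hn]
  apply Set.Subset.antisymm (good_subset_closure n)
  intro x hx
  have hle : AddSubmonoid.closure ({4, 4 * n + 2, 4 * n + 5} : Set ℕ) ≤ goodSet n := by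
    rw [AddSubmonoid.closure_le]
    intro y hy
    simp only [Set.mem_insert_iff, Set.mem_singleton_iff] at hy
    rw [SetLike.mem_coe, mem_goodSet]
    unfold goodP
    rcases hy with rfl | rfl | rfl <;> omega
  exact (mem_goodSet n x).mp (hle hx)
end

section
/- For n ≥ 1, the complement ℕ \ S_n of the semigroup S_n = ⟨4, 4n+2, 4n+5⟩ (the numerical semigroup generated by 4, 4n+2 and 4n+5) is finite, with Frobenius number (largest gap) equal to 8n+3. -/
/-- The numerical semigroup `⟨4, 4n+2, 4n+5⟩`: all sums `4a + (4n+2)b + (4n+5)c`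
with `a, b, c ∈ ℕ`. -/
def numSgp (n : ℕ) : Set ℕ :=
  {x | ∃ a b c : ℕ, x = 4 * a + (4 * n + 2) * b + (4 * n + 5) * c}

lemma mem_of_gt (n x : ℕ) (hn : 1 ≤ n) (hx : 8 * n + 3 < x) : x ∈ numSgp n := by
  have h4 : x % 4 = 0 ∨ x % 4 = 1 ∨ x % 4 = 2 ∨ x % 4 = 3 := by omega
  rcases h4 with h | h | h | h
  · exact ⟨x / 4, 0, 0, by simp only [mul_zero, mul_one, add_zero]; omega⟩
  · exact ⟨(x - (4 * n + 5)) / 4, 0, 1, by simp only [mul_zero, mul_one, add_zero]; omega⟩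
  · exact ⟨(x - (4 * n + 2)) / 4, 1, 0, by simp only [mul_zero, mul_one, add_zero]; omega⟩
  · exact ⟨(x - (8 * n + 7)) / 4, 1, 1, by simp only [mul_zero, mul_one, add_zero]; omega⟩

lemma not_mem_frob (n : ℕ) (hn : 1 ≤ n) : 8 * n + 3 ∉ numSgp n := by
  rintro ⟨a, b, c, h⟩
  have hb : b ≤ 2 := by nlinarith
  have hc : c ≤ 2 := by nlinarith
  interval_cases b <;> interval_cases c <;> omega

/-- For `n ≥ 1`, the complement `ℕ \ ⟨4, 4n+2, 4n+5⟩` is finite, and its largest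
element (the Frobenius number) is `8n+3`. -/
theorem stmt_14 (n : ℕ) (hn : 1 ≤ n) :
    {x : ℕ | x ∉ numSgp n}.Finite ∧
    IsGreatest {x : ℕ | x ∉ numSgp n} (8 * n + 3) := by
  constructor
  · apply Set.Finite.subset (Set.finite_Iio (8 * n + 4))
    intro x hx
    simp only [Set.mem_Iio]
    by_contra h'
    exact hx (mem_of_gt n x hn (by omega))
  · refine ⟨not_mem_frob n hn, fun x hx => ?_⟩
    by_contra h'
    exact hx (mem_of_gt n x hn (by omega))
end
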